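/- Let a ∈ ℂ∖{0}, b ∈ ℂ, and fix a complex square root √(b/a). Set R := min{|a|^{−1/2}, |ab|^{−1/2}} (interpreted as |a|^{−1/2} when b = 0). Then (1) the set {z ∈ ℂ : |az² − b| ≤ 1} is contained in B_{√(b/a)}(R) ∪ B_{−√(b/a)}(R); and (2) its Lebesgue measure satisfies vol{z ∈ ℂ : |az² − b| ≤ 1} ≪ R² ≤ min{|a|^{−1}, |ab|^{−1}}, with absolute implied constant (the quantity |ab|^{−1} being interpreted as +∞ when b = 0). -/

import Mathlib

/-!
Since `s² = b / a`, we have `a z² - b = a (z - s) (z + s)`. If `z` is closer to `s` than to `-s`,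
then `|z + s|` dominates both `|z - s|` and `|s|`, so `|a z² - b| ≤ 1` gives `|a| |z - s|² ≤ 1`
and `|a| |s| |z - s| ≤ 1`; as `|a| |s| = |ab|^{1/2}`, this says `|z - s| ≤ R`.
The volume bound then follows from the area `π R²` of each of the two discs.
-/

noncomputable section

namespace Paper

open Metric MeasureTheory

open Classical in
/-- `R = min{|a|^{-1/2}, |ab|^{-1/2}}`, interpreted as `|a|^{-1/2}` when `b = 0`. -/
def R14 (a b : ℂ) : ℝ :=
  if b = 0 then (Real.sqrt (‖a‖))⁻¹
  else min ((Real.sqrt (‖a‖))⁻¹) ((Real.sqrt (‖a * b‖))⁻¹)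

lemma le_inv_sqrt_of_mul_sq_le_one {c x : ℝ} (hc : 0 < c) (hx : 0 ≤ x) (h : c * x ^ 2 ≤ 1) :
    x ≤ (Real.sqrt c)⁻¹ := by
  rw [← Real.sqrt_inv, Real.le_sqrt hx (inv_nonneg.mpr hc.le), ← mul_one c⁻¹]
  exact (le_inv_mul_iff₀ hc).mpr h

lemma norm_le_norm_add_of_norm_sub_le {E : Type*} [NormedAddCommGroup E] [NormedSpace ℝ E]
    {z s : E} (h : ‖z - s‖ ≤ ‖z + s‖) : ‖s‖ ≤ ‖z + s‖ := by
  have : (2 : ℝ) * ‖s‖ ≤ ‖z + s‖ + ‖z - s‖ :=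
    calc (2 : ℝ) * ‖s‖ = ‖(z + s) - (z - s)‖ := by
          rw [← Real.norm_two, ← norm_smul, two_smul]; congr 1; abel
      _ ≤ ‖z + s‖ + ‖z - s‖ := norm_sub_le _ _
  linarith

theorem _root_.Complex.volume_real_closedBall (a : ℂ) {r : ℝ} (hr : 0 ≤ r) :
    volume.real (closedBall a r) = Real.pi * r ^ 2 := by
  simp [measureReal_def, hr, mul_comm]

lemma volume_real_le_of_subset_closedBall_union {S : Set ℂ} {p q : ℂ} {r : ℝ} (hr : 0 ≤ r)
    (hS : S ⊆ closedBall p r ∪ closedBall q r) : volume.real S ≤ 2 * Real.pi * r ^ 2 :=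
  calc volume.real S ≤ volume.real (closedBall p r ∪ closedBall q r) :=
        measureReal_mono hS (isBounded_closedBall.union isBounded_closedBall).measure_lt_top.ne
    _ ≤ volume.real (closedBall p r) + volume.real (closedBall q r) := measureReal_union_le _ _
    _ = 2 * Real.pi * r ^ 2 := by
      rw [Complex.volume_real_closedBall _ hr, Complex.volume_real_closedBall _ hr]; ring

lemma R14_nonneg (a b : ℂ) : 0 ≤ R14 a b := by
  unfold R14; split_ifs <;> positivity

lemma le_R14 {a b : ℂ} {x : ℝ} (ha : x ≤ (Real.sqrt ‖a‖)⁻¹)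
    (hab : b ≠ 0 → x ≤ (Real.sqrt ‖a * b‖)⁻¹) : x ≤ R14 a b := by
  unfold R14; split_ifs with hb
  exacts [ha, le_min ha (hab hb)]

lemma R14_sq_le_inv_norm (a b : ℂ) : R14 a b ^ 2 ≤ ‖a‖⁻¹ := by
  have : R14 a b ≤ (Real.sqrt ‖a‖)⁻¹ := by
    unfold R14; split_ifs
    exacts [le_rfl, min_le_left _ _]
  calc R14 a b ^ 2 ≤ (Real.sqrt ‖a‖)⁻¹ ^ 2 := by gcongr; exact R14_nonneg a b
    _ = ‖a‖⁻¹ := by rw [inv_pow, Real.sq_sqrt (norm_nonneg _)]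

lemma R14_sq_le_inv_norm_mul {a b : ℂ} (hb : b ≠ 0) : R14 a b ^ 2 ≤ ‖a * b‖⁻¹ := by
  have : R14 a b ≤ (Real.sqrt ‖a * b‖)⁻¹ := by
    rw [R14, if_neg hb]; exact min_le_right _ _
  calc R14 a b ^ 2 ≤ (Real.sqrt ‖a * b‖)⁻¹ ^ 2 := by gcongr; exact R14_nonneg a b
    _ = ‖a * b‖⁻¹ := by rw [inv_pow, Real.sq_sqrt (norm_nonneg _)]

lemma dist_le_R14_of_norm_sub_le_norm_add {a b s z : ℂ} (ha : a ≠ 0) (hs : a * s ^ 2 = b)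
    (hz : ‖a * z ^ 2 - b‖ ≤ 1) (hle : ‖z - s‖ ≤ ‖z + s‖) : dist z s ≤ R14 a b := by
  have hA : 0 < ‖a‖ := norm_pos_iff.mpr ha
  have hfac : ‖a‖ * (‖z - s‖ * ‖z + s‖) ≤ 1 := by
    rw [← norm_mul, ← norm_mul]; convert hz using 2; rw [← hs]; ring
  have hsq : ‖a‖ * ‖z - s‖ ^ 2 ≤ 1 :=
    calc ‖a‖ * ‖z - s‖ ^ 2 = ‖a‖ * (‖z - s‖ * ‖z - s‖) := by ring
      _ ≤ ‖a‖ * (‖z - s‖ * ‖z + s‖) := by gcongr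
      _ ≤ 1 := hfac
  have hlin : ‖a‖ * ‖s‖ * ‖z - s‖ ≤ 1 :=
    calc ‖a‖ * ‖s‖ * ‖z - s‖ = ‖a‖ * (‖z - s‖ * ‖s‖) := by ring
      _ ≤ ‖a‖ * (‖z - s‖ * ‖z + s‖) := by gcongr; exact norm_le_norm_add_of_norm_sub_le hle
      _ ≤ 1 := hfac
  rw [dist_eq_norm]
  refine le_R14 (le_inv_sqrt_of_mul_sq_le_one hA (norm_nonneg _) hsq) fun hb => ?_
  have hab : ‖a * b‖ = (‖a‖ * ‖s‖) ^ 2 := by rw [← hs]; simp only [norm_mul, norm_pow]; ring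
  refine le_inv_sqrt_of_mul_sq_le_one (norm_pos_iff.mpr (mul_ne_zero ha hb)) (norm_nonneg _) ?_
  calc ‖a * b‖ * ‖z - s‖ ^ 2 = (‖a‖ * ‖s‖ * ‖z - s‖) ^ 2 := by rw [hab]; ring
    _ ≤ 1 := pow_le_one₀ (by positivity) hlin

lemma sublevel_subset_closedBall_union {a b s : ℂ} (ha : a ≠ 0) (hs : a * s ^ 2 = b) :
    {z : ℂ | ‖a * z ^ 2 - b‖ ≤ 1} ⊆ closedBall s (R14 a b) ∪ closedBall (-s) (R14 a b) := by
  intro z hz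
  rcases le_total ‖z - s‖ ‖z + s‖ with hle | hle
  · exact Or.inl (dist_le_R14_of_norm_sub_le_norm_add ha hs hz hle)
  · refine Or.inr (dist_le_R14_of_norm_sub_le_norm_add ha (by rwa [neg_sq]) hz ?_)
    rwa [sub_neg_eq_add, ← sub_eq_add_neg]

theorem statement14 :
    ∃ c : ℝ, 0 < c ∧ ∀ a b s : ℂ, a ≠ 0 → s ^ 2 = b / a →
      ({z : ℂ | ‖a * z ^ 2 - b‖ ≤ 1} ⊆
          Metric.closedBall s (R14 a b) ∪ Metric.closedBall (-s) (R14 a b)) ∧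
      (MeasureTheory.volume {z : ℂ | ‖a * z ^ 2 - b‖ ≤ 1}).toReal
          ≤ c * R14 a b ^ 2 ∧
      R14 a b ^ 2 ≤ (‖a‖)⁻¹ ∧
      (b ≠ 0 → R14 a b ^ 2 ≤ (‖a * b‖)⁻¹) := by
  refine ⟨2 * Real.pi, by positivity, fun a b s ha hs => ?_⟩
  have hsub := sublevel_subset_closedBall_union ha (by rw [hs, mul_div_cancel₀ _ ha])
  exact ⟨hsub, volume_real_le_of_subset_closedBall_union (R14_nonneg a b) hsub,
    R14_sq_le_inv_norm a b, R14_sq_le_inv_norm_mul⟩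

end Paper
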